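/- There is a bijection between partial Motzkin paths of length n ending at height h equipped with a choice of elevation level p ∈ {0,1,...,h}, and free Motzkin paths of length n; moreover under this bijection a pair (P, p) maps to a free Motzkin path whose number of down steps equals the number of down steps of P plus p. -/

import Mathlib

/-- A Motzkin step: up, down, or horizontal. -/
inductive Step | U | D | H
deriving DecidableEq

instance : Fintype Step :=
  ⟨{Step.U, Step.D, Step.H}, fun x => by cases x <;> simp⟩

/-- The height change of one step. -/
def Step.val : Step → ℤ
  | Step.U => 1
  | Step.D => -1
  | Step.H => 0

/-- The weight of a step: up steps weigh `1`, down steps `t`, horizontal steps `k`. -/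
def Step.wt (k t : ℕ) : Step → ℕ
  | Step.U => 1
  | Step.D => t
  | Step.H => k

/-- The height of the path `p` after its first `m` steps. -/
def pathHeight {n : ℕ} (p : Fin n → Step) (m : ℕ) : ℤ :=
  ∑ i ∈ Finset.univ.filter (fun i : Fin n => (i : ℕ) < m), (p i).val

/-- A partial Motzkin path: never goes below the x-axis. -/
def IsPartialMotzkin {n : ℕ} (p : Fin n → Step) : Prop :=
  ∀ m ≤ n, 0 ≤ pathHeight p m

/-- A (complete) Motzkin path: never below the x-axis and ends on the x-axis. -/
def IsMotzkin {n : ℕ} (p : Fin n → Step) : Prop :=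
  IsPartialMotzkin p ∧ pathHeight p n = 0

instance {n : ℕ} (p : Fin n → Step) : Decidable (IsPartialMotzkin p) :=
  Nat.decidableBallLE n _

instance {n : ℕ} (p : Fin n → Step) : Decidable (IsMotzkin p) :=
  inferInstanceAs (Decidable (_ ∧ _))

/-- The weight of a weighted Motzkin path. -/
def pathWt {n : ℕ} (k t : ℕ) (p : Fin n → Step) : ℕ := ∏ i, (p i).wt k t

/-- Sum of the weights of all `(k,t)`-Motzkin paths of length `n`. -/
def motzkinWt (k t n : ℕ) : ℕ :=
  ∑ p ∈ Finset.univ.filter (fun p : Fin n → Step => IsMotzkin p), pathWt k t p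

/-- Sum of the weights of all partial `(k,t)`-Motzkin paths of length `n`
ending at height `h`. -/
def partialWt (k t n h : ℕ) : ℕ :=
  ∑ p ∈ Finset.univ.filter
      (fun p : Fin n → Step => IsPartialMotzkin p ∧ pathHeight p n = (h : ℤ)),
    pathWt k t p

/-- The number of down steps of a path. -/
def downCount {n : ℕ} (p : Fin n → Step) : ℕ :=
  (Finset.univ.filter fun i => p i = Step.D).card

/-! The bijection is built one final step at a time. Let a partial path consist of a prefix
of height `h` followed by a step `s`, and carry a level `p ≤ h + val s`. When `s = U` and
`p = h + 1`, the last step is the rightmost up step leaving level `h`: it becomes `D` and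
the prefix keeps level `h`. Otherwise `s` stays and the prefix keeps level `p`. Either way
the prefix gets a level `p' ≤ h`, so induction applies to it, and `p + #D` is unchanged. -/

namespace Step

def elevate (h : ℤ) (x : Step × ℕ) : Step × ℕ :=
  if x.1 = U ∧ h < x.2 then (D, x.2 - 1) else x

def lower (h : ℤ) (x : Step × ℕ) : Step × ℕ :=
  if x.1 = D ∧ (x.2 : ℤ) = h then (U, x.2 + 1) else x

variable {h : ℤ} {x : Step × ℕ}

lemma elevate_snd_le (hh : 0 ≤ h) (hx : (x.2 : ℤ) ≤ h + x.1.val) :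
    ((elevate h x).2 : ℤ) ≤ h := by
  obtain ⟨s, p⟩ := x
  cases s <;> grind [elevate, val]

lemma lower_snd_le (hx : (x.2 : ℤ) ≤ h) : ((lower h x).2 : ℤ) ≤ h + (lower h x).1.val := by
  obtain ⟨s, p⟩ := x
  cases s <;> grind [lower, val]

lemma lower_elevate (hh : 0 ≤ h) (hx : (x.2 : ℤ) ≤ h + x.1.val) :
    lower h (elevate h x) = x := by
  obtain ⟨s, p⟩ := x
  cases s <;> grind [elevate, lower, val]

lemma elevate_lower (hx : (x.2 : ℤ) ≤ h) : elevate h (lower h x) = x := by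
  obtain ⟨s, p⟩ := x
  cases s <;> grind [elevate, lower]

lemma elevate_snd_add_ite (hh : 0 ≤ h) :
    (elevate h x).2 + (if (elevate h x).1 = D then 1 else 0) =
      x.2 + if x.1 = D then 1 else 0 := by
  obtain ⟨s, p⟩ := x
  cases s <;> grind [elevate]

end Step

section Snoc

variable {n : ℕ} (P : Fin n → Step) (s : Step)

lemma pathHeight_snoc_of_le {m : ℕ} (hm : m ≤ n) :
    pathHeight (Fin.snoc P s : Fin (n + 1) → Step) m = pathHeight P m := by
  simp only [pathHeight, Finset.sum_filter, Fin.sum_univ_castSucc, Fin.val_castSucc,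
    Fin.snoc_castSucc, Fin.val_last, not_lt.2 hm, if_false, add_zero]

lemma pathHeight_snoc_succ :
    pathHeight (Fin.snoc P s : Fin (n + 1) → Step) (n + 1) = pathHeight P n + s.val := by
  simp [pathHeight, Finset.sum_filter, Fin.sum_univ_castSucc]

lemma downCount_snoc :
    downCount (Fin.snoc P s : Fin (n + 1) → Step) =
      downCount P + if s = Step.D then 1 else 0 := by
  rw [downCount, downCount, Finset.card_filter, Finset.card_filter, Fin.sum_univ_castSucc]
  simp

variable {P s}

lemma isPartialMotzkin_snoc_iff :
    IsPartialMotzkin (Fin.snoc P s : Fin (n + 1) → Step) ↔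
      IsPartialMotzkin P ∧ 0 ≤ pathHeight P n + s.val := by
  refine ⟨fun h => ⟨fun m hm => ?_, ?_⟩, fun ⟨hP, hs⟩ m hm => ?_⟩
  · simpa [pathHeight_snoc_of_le P s hm] using h m (by omega)
  · simpa [pathHeight_snoc_succ] using h (n + 1) le_rfl
  · obtain hm | rfl := Nat.le_succ_iff.1 hm
    · rw [pathHeight_snoc_of_le P s hm]
      exact hP m hm
    · rwa [pathHeight_snoc_succ]

lemma isPartialMotzkin_snoc_and_le_iff {p : ℕ} :
    IsPartialMotzkin (Fin.snoc P s : Fin (n + 1) → Step) ∧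
        (p : ℤ) ≤ pathHeight (Fin.snoc P s : Fin (n + 1) → Step) (n + 1) ↔
      IsPartialMotzkin P ∧ (p : ℤ) ≤ pathHeight P n + s.val := by
  rw [isPartialMotzkin_snoc_iff, pathHeight_snoc_succ]
  constructor
  · exact fun ⟨⟨hP, _⟩, hp⟩ => ⟨hP, hp⟩
  · exact fun ⟨hP, hp⟩ => ⟨⟨hP, by omega⟩, hp⟩

end Snoc

section Init

variable {n : ℕ} (P : Fin (n + 1) → Step)

lemma isPartialMotzkin_and_le_iff_init {p : ℕ} :
    IsPartialMotzkin P ∧ (p : ℤ) ≤ pathHeight P (n + 1) ↔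
      IsPartialMotzkin (Fin.init P) ∧
        (p : ℤ) ≤ pathHeight (Fin.init P) n + (P (Fin.last n)).val := by
  conv_lhs => rw [← Fin.snoc_init_self P]
  exact isPartialMotzkin_snoc_and_le_iff

lemma downCount_eq_init_add :
    downCount P = downCount (Fin.init P) + if P (Fin.last n) = Step.D then 1 else 0 := by
  conv_lhs => rw [← Fin.snoc_init_self P]
  exact downCount_snoc _ _

end Init

abbrev LevelledPath (n : ℕ) : Type :=
  {q : (Fin n → Step) × ℕ // IsPartialMotzkin q.1 ∧ (q.2 : ℤ) ≤ pathHeight q.1 n}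

namespace LevelledPath

def succEquiv (n : ℕ) : LevelledPath (n + 1) ≃ Step × LevelledPath n where
  toFun q :=
    let x := Step.elevate (pathHeight (Fin.init q.1.1) n) (q.1.1 (Fin.last n), q.1.2)
    have hq := (isPartialMotzkin_and_le_iff_init q.1.1).1 q.2
    (x.1, ⟨(Fin.init q.1.1, x.2), hq.1, Step.elevate_snd_le (hq.1 n le_rfl) hq.2⟩)
  invFun r :=
    let x := Step.lower (pathHeight r.2.1.1 n) (r.1, r.2.1.2)
    ⟨(Fin.snoc r.2.1.1 x.1, x.2),
      isPartialMotzkin_snoc_and_le_iff.2 ⟨r.2.2.1, Step.lower_snd_le r.2.2.2⟩⟩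
  left_inv := by
    rintro ⟨⟨P, p⟩, hq⟩
    obtain ⟨hP, hp⟩ := (isPartialMotzkin_and_le_iff_init P).1 hq
    ext1
    simp only [Prod.mk.eta, Step.lower_elevate (x := (P (Fin.last n), p)) (hP n le_rfl) hp,
      Fin.snoc_init_self]
  right_inv := by
    rintro ⟨s, ⟨P, p⟩, hq⟩
    simp only [Fin.init_snoc, Fin.snoc_last, Prod.mk.eta, Step.elevate_lower (x := (s, p)) hq.2]

lemma succEquiv_apply_fst {n : ℕ} (q : LevelledPath (n + 1)) :
    (succEquiv n q).1 =
      (Step.elevate (pathHeight (Fin.init q.1.1) n) (q.1.1 (Fin.last n), q.1.2)).1 :=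
  rfl

lemma succEquiv_apply_snd_coe {n : ℕ} (q : LevelledPath (n + 1)) :
    ((succEquiv n q).2 : (Fin n → Step) × ℕ) = (Fin.init q.1.1,
      (Step.elevate (pathHeight (Fin.init q.1.1) n) (q.1.1 (Fin.last n), q.1.2)).2) :=
  rfl

lemma downCount_add_level_succEquiv {n : ℕ} (q : LevelledPath (n + 1)) :
    downCount q.1.1 + q.1.2 = downCount (succEquiv n q).2.1.1 + (succEquiv n q).2.1.2 +
      if (succEquiv n q).1 = Step.D then 1 else 0 := by
  have hh := ((isPartialMotzkin_and_le_iff_init q.1.1).1 q.2).1 n le_rfl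
  rw [succEquiv_apply_fst, succEquiv_apply_snd_coe, add_assoc, Step.elevate_snd_add_ite hh,
    downCount_eq_init_add]
  ring

lemma level_eq_zero (q : LevelledPath 0) : q.1.2 = 0 := by
  simpa [pathHeight] using q.2.2

def zeroEquiv : LevelledPath 0 ≃ (Fin 0 → Step) where
  toFun q := q.1.1
  invFun P := ⟨(P, 0), fun _ _ => by simp [pathHeight], by simp [pathHeight]⟩
  left_inv q := Subtype.ext (Prod.ext rfl (level_eq_zero q).symm)
  right_inv _ := rfl

def elevationEquiv : (n : ℕ) → LevelledPath n ≃ (Fin n → Step)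
  | 0 => zeroEquiv
  | n + 1 => (succEquiv n).trans
      (((Equiv.refl Step).prodCongr (elevationEquiv n)).trans (Fin.snocEquiv fun _ => Step))

lemma downCount_elevationEquiv : ∀ {n : ℕ} (q : LevelledPath n),
    downCount (elevationEquiv n q) = downCount q.1.1 + q.1.2
  | 0, q => by rw [level_eq_zero q]; rfl
  | n + 1, q => by
    rw [downCount_add_level_succEquiv q, ← downCount_elevationEquiv]
    exact downCount_snoc _ _

end LevelledPath

/-- The elevation bijection: pairs `(P, p)` of a partial Motzkin path `P` of length `n`
(ending at height `h`) with an elevation level `p ∈ {0,…,h}` correspond bijectively to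
free Motzkin paths of length `n`, and the image has `p` more down steps than `P`. -/
theorem stmt_12 (n : ℕ) :
    ∃ e : {q : (Fin n → Step) × ℕ //
            IsPartialMotzkin q.1 ∧ (q.2 : ℤ) ≤ pathHeight q.1 n} ≃ (Fin n → Step),
      ∀ q, downCount (e q) = downCount q.1.1 + q.1.2 :=
  ⟨LevelledPath.elevationEquiv n, LevelledPath.downCount_elevationEquiv⟩
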